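/- For κ > 0 and s, t ∈ ℝ with s ≠ t, let q_κ^t(u) = (√κ/(2π)^{1/4})·exp(−κ²(u−t)²/4) and (∂⁻¹q_κ^t)(x) = (1/2)∫_{−∞}^x q_κ^t − (1/2)∫_x^∞ q_κ^t. Then lim_{κ→∞} (κ/√(2π)) ∫_ℝ q_κ^s(x) (∂⁻¹q_κ^t)(x) dx = 1 if s > t, and = −1 if s < t. -/

import Mathlib

open MeasureTheory Real Filter

noncomputable def qGauss (κ x : ℝ) (u : ℝ) : ℝ :=
  Real.sqrt κ / (2 * Real.pi) ^ ((1 : ℝ) / 4) * Real.exp (-(κ ^ 2) * (u - x) ^ 2 / 4)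

noncomputable def symmAntideriv (f : ℝ → ℝ) (x : ℝ) : ℝ :=
  (1 / 2) * (∫ s in Set.Iic x, f s) - (1 / 2) * ∫ s in Set.Ici x, f s

/-! For `κ > 0` the mass `M = ∫ q_κ^t` does not depend on `t` and satisfies `κ M² / √(2π) = 2`.
Since `∂⁻¹q_κ^t(x) = M/2 - ∫_{[x,∞)} q_κ^t`, the normalized pairing equals
`1 - κ/√(2π) · ∫ q_κ^s(x) ∫_{[x,∞)} q_κ^t`. For `t < s`, splitting at the midpoint `m = (s+t)/2`
bounds the correction by `M · ∫_{[m,∞)} q_κ^t + M · ∫_{(-∞,m)} q_κ^s`: two Gaussian tails at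
distance `(s-t)/2` from their centres, each at most `√2 exp(-κ²(s-t)²/32) M`, so the correction
vanishes as `κ → ∞`. The case `s < t` follows from the reflection `u ↦ -u`, which swaps the
roles of `s` and `t` and changes the sign of `∂⁻¹`. -/

open Set

section SymmAntideriv

variable {f g : ℝ → ℝ}

theorem symmAntideriv_eq_sub (hg : Integrable g) (x : ℝ) :
    symmAntideriv g x = (∫ u, g u) / 2 - ∫ u in Ici x, g u := by
  rw [symmAntideriv, ← intervalIntegral.integral_Iic_add_Ioi hg.integrableOn hg.integrableOn,
    integral_Ici_eq_integral_Ioi]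
  ring

theorem symmAntideriv_comp_neg (g : ℝ → ℝ) (x : ℝ) :
    symmAntideriv (fun u => g (-u)) x = -symmAntideriv g (-x) := by
  simp only [symmAntideriv, integral_Ici_eq_integral_Ioi, integral_comp_neg_Iic,
    integral_comp_neg_Ioi]
  ring

theorem integral_mul_symmAntideriv_comp_neg (f g : ℝ → ℝ) :
    ∫ x, f (-x) * symmAntideriv (fun u => g (-u)) x = -∫ x, f x * symmAntideriv g x := by
  simp_rw [symmAntideriv_comp_neg, mul_neg]
  rw [integral_neg, integral_neg_eq_self (fun x => f x * symmAntideriv g x)]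

theorem antitone_setIntegral_Ici (hg : Integrable g) (hg0 : 0 ≤ g) :
    Antitone fun x => ∫ u in Ici x, g u := fun _ _ hxy =>
  setIntegral_mono_set hg.integrableOn (.of_forall hg0) (Ici_subset_Ici.2 hxy).eventuallyLE

theorem setIntegral_Ici_le_add_indicator (hg : Integrable g) (hg0 : 0 ≤ g) (m x : ℝ) :
    ∫ u in Ici x, g u ≤ (∫ u in Ici m, g u) + (Iio m).indicator (fun _ => ∫ u, g u) x := by
  by_cases hx : x ∈ Iio m
  · rw [indicator_of_mem hx]
    have hle : ∫ u in Ici x, g u ≤ ∫ u, g u := setIntegral_le_integral hg (.of_forall hg0)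
    have hnonneg : 0 ≤ ∫ u in Ici m, g u := setIntegral_nonneg measurableSet_Ici fun u _ => hg0 u
    linarith
  · rw [indicator_of_notMem hx, add_zero]
    exact antitone_setIntegral_Ici hg hg0 (not_lt.1 hx)

theorem integrable_mul_setIntegral_Ici (hf : Integrable f) (hg : Integrable g) (hg0 : 0 ≤ g) :
    Integrable fun x => f x * ∫ u in Ici x, g u := by
  refine hf.mul_bdd (antitone_setIntegral_Ici hg hg0).measurable.aestronglyMeasurable
    (c := ∫ u, g u) (.of_forall fun x => ?_)
  rw [Real.norm_of_nonneg (setIntegral_nonneg measurableSet_Ici fun u _ => hg0 u)]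
  exact setIntegral_le_integral hg (.of_forall hg0)

theorem integral_mul_symmAntideriv (hf : Integrable f) (hg : Integrable g) (hg0 : 0 ≤ g) :
    ∫ x, f x * symmAntideriv g x
      = (∫ x, f x) * (∫ u, g u) / 2 - ∫ x, f x * ∫ u in Ici x, g u := by
  simp_rw [symmAntideriv_eq_sub hg, mul_sub]
  rw [integral_sub (hf.mul_const _) (integrable_mul_setIntegral_Ici hf hg hg0),
    integral_mul_const]
  ring

theorem integral_mul_setIntegral_Ici_le (hf : Integrable f) (hf0 : 0 ≤ f) (hg : Integrable g)
    (hg0 : 0 ≤ g) (m : ℝ) :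
    ∫ x, f x * ∫ u in Ici x, g u
      ≤ (∫ x, f x) * (∫ u in Ici m, g u) + (∫ x in Iio m, f x) * ∫ u, g u := by
  have hind : (fun x => f x * (Iio m).indicator (fun _ => ∫ u, g u) x)
      = (Iio m).indicator fun x => f x * ∫ u, g u :=
    funext fun x => (indicator_mul_right _ _ _).symm
  have hind_int : Integrable fun x => f x * (Iio m).indicator (fun _ => ∫ u, g u) x := by
    rw [hind]
    exact (hf.mul_const _).indicator measurableSet_Iio
  calc ∫ x, f x * ∫ u in Ici x, g u
      ≤ ∫ x, f x * ((∫ u in Ici m, g u) + (Iio m).indicator (fun _ => ∫ u, g u) x) := by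
        refine integral_mono (integrable_mul_setIntegral_Ici hf hg hg0) ?_ fun x =>
          mul_le_mul_of_nonneg_left (setIntegral_Ici_le_add_indicator hg hg0 m x) (hf0 x)
        simp_rw [mul_add]
        exact (hf.mul_const _).add hind_int
    _ = _ := by
        simp_rw [mul_add]
        rw [integral_add (hf.mul_const _) hind_int, integral_mul_const, hind,
          integral_indicator measurableSet_Iio, integral_mul_const]

end SymmAntideriv

/-- On `δ ≤ |u - t|`, `exp (-c (u-t)²) ≤ exp (-c δ²/2) exp (-(c/2) (u-t)²)`, and the wider
Gaussian has `√2` times the mass. -/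
theorem setIntegral_exp_neg_mul_sq_tail_le {c δ : ℝ} (hc : 0 < c) (hδ : 0 ≤ δ) (t : ℝ) :
    ∫ u in {u | δ ≤ |u - t|}, exp (-c * (u - t) ^ 2)
      ≤ √2 * exp (-c * δ ^ 2 / 2) * ∫ u, exp (-c * (u - t) ^ 2) := by
  have hint : Integrable fun u => exp (-c * δ ^ 2 / 2) * exp (-(c / 2) * (u - t) ^ 2) :=
    ((integrable_exp_neg_mul_sq (half_pos hc)).comp_sub_right t).const_mul _
  calc ∫ u in {u | δ ≤ |u - t|}, exp (-c * (u - t) ^ 2)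
      ≤ ∫ u in {u | δ ≤ |u - t|}, exp (-c * δ ^ 2 / 2) * exp (-(c / 2) * (u - t) ^ 2) := by
        refine setIntegral_mono_on ((integrable_exp_neg_mul_sq hc).comp_sub_right t).integrableOn
          hint.integrableOn (measurableSet_le measurable_const (by fun_prop)) fun u hu => ?_
        have hsq : δ ^ 2 ≤ (u - t) ^ 2 := by
          simpa only [sq_abs] using pow_le_pow_left₀ hδ hu 2
        rw [← exp_add]
        exact exp_le_exp.2 (by nlinarith)
    _ ≤ ∫ u, exp (-c * δ ^ 2 / 2) * exp (-(c / 2) * (u - t) ^ 2) :=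
        setIntegral_le_integral hint (.of_forall fun _ => by positivity)
    _ = √2 * exp (-c * δ ^ 2 / 2) * ∫ u, exp (-c * (u - t) ^ 2) := by
        rw [integral_const_mul, integral_sub_right_eq_self (fun u => exp (-(c / 2) * u ^ 2)),
          integral_sub_right_eq_self (fun u => exp (-c * u ^ 2)), integral_gaussian,
          integral_gaussian, mul_comm √2, mul_assoc, ← sqrt_mul zero_le_two]
        congr 2
        field_simp

section QGauss

variable {κ : ℝ}

theorem qGauss_eq_mul_exp (κ t u : ℝ) :
    qGauss κ t u = √κ / (2 * π) ^ ((1 : ℝ) / 4) * exp (-(κ ^ 2 / 4) * (u - t) ^ 2) := by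
  rw [qGauss]
  ring_nf

theorem qGauss_nonneg (κ t : ℝ) : 0 ≤ qGauss κ t := fun _ => by
  rw [qGauss]
  positivity

theorem qGauss_neg (κ t u : ℝ) : qGauss κ t (-u) = qGauss κ (-t) u := by
  simp only [qGauss]
  ring_nf

theorem integrable_qGauss (hκ : κ ≠ 0) (t : ℝ) : Integrable (qGauss κ t) := by
  simp_rw [funext (qGauss_eq_mul_exp κ t)]
  exact ((integrable_exp_neg_mul_sq (by positivity)).comp_sub_right t).const_mul _

theorem integral_qGauss (κ t : ℝ) :
    ∫ u, qGauss κ t u = √κ / (2 * π) ^ ((1 : ℝ) / 4) * √(π / (κ ^ 2 / 4)) := by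
  simp_rw [qGauss_eq_mul_exp, integral_const_mul]
  rw [integral_sub_right_eq_self (fun u => exp (-(κ ^ 2 / 4) * u ^ 2)), integral_gaussian]

theorem integral_qGauss_indep (κ s t : ℝ) : ∫ u, qGauss κ s u = ∫ u, qGauss κ t u := by
  rw [integral_qGauss, integral_qGauss]

theorem integral_qGauss_sq (hκ : 0 < κ) (t : ℝ) :
    κ / √(2 * π) * (∫ u, qGauss κ t u) ^ 2 = 2 := by
  have h2π : (0 : ℝ) < 2 * π := by positivity
  have hroot : ((2 * π) ^ ((1 : ℝ) / 4)) ^ 2 = √(2 * π) := by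
    rw [sqrt_eq_rpow, ← rpow_natCast, ← rpow_mul h2π.le]
    norm_num
  rw [integral_qGauss, mul_pow, div_pow, hroot, sq_sqrt hκ.le, sq_sqrt (by positivity)]
  field_simp
  rw [sq_sqrt h2π.le]
  ring

theorem setIntegral_qGauss_le_of_subset (hκ : κ ≠ 0) {δ : ℝ} (hδ : 0 ≤ δ) {t : ℝ} {S : Set ℝ}
    (hS : S ⊆ {u | δ ≤ |u - t|}) :
    ∫ u in S, qGauss κ t u ≤ √2 * exp (-(κ ^ 2 / 4) * δ ^ 2 / 2) * ∫ u, qGauss κ t u := by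
  refine (setIntegral_mono_set (integrable_qGauss hκ t).integrableOn
    (.of_forall (qGauss_nonneg κ t)) hS.eventuallyLE).trans ?_
  simp_rw [qGauss_eq_mul_exp, integral_const_mul]
  rw [mul_left_comm]
  exact mul_le_mul_of_nonneg_left
    (setIntegral_exp_neg_mul_sq_tail_le (by positivity) hδ t) (by positivity)

end QGauss

section Pairing

variable {κ s t : ℝ}

theorem qGauss_pairing_tail_le (hκ : 0 < κ) (hts : t ≤ s) :
    κ / √(2 * π) * ∫ x, qGauss κ s x * ∫ u in Ici x, qGauss κ t u
      ≤ 4 * √2 * exp (-(κ ^ 2 / 4) * ((s - t) / 2) ^ 2 / 2) := by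
  set δ := (s - t) / 2 with hδdef
  set E := √2 * exp (-(κ ^ 2 / 4) * δ ^ 2 / 2)
  have hδ : 0 ≤ δ := by positivity
  have hs := integrable_qGauss hκ.ne' s
  have ht := integrable_qGauss hκ.ne' t
  have tail_t : ∫ u in Ici ((s + t) / 2), qGauss κ t u ≤ E * ∫ u, qGauss κ t u :=
    setIntegral_qGauss_le_of_subset hκ.ne' hδ fun u (hu : (s + t) / 2 ≤ u) =>
      show δ ≤ |u - t| from le_abs.2 (.inl (by linarith [hδdef]))
  have tail_s : ∫ u in Iio ((s + t) / 2), qGauss κ s u ≤ E * ∫ u, qGauss κ s u :=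
    setIntegral_qGauss_le_of_subset hκ.ne' hδ fun u (hu : u < (s + t) / 2) =>
      show δ ≤ |u - s| from le_abs.2 (.inr (by linarith [hδdef]))
  have hN : 0 ≤ κ / √(2 * π) := by positivity
  have hM : 0 ≤ ∫ u, qGauss κ t u := integral_nonneg (qGauss_nonneg κ t)
  calc κ / √(2 * π) * ∫ x, qGauss κ s x * ∫ u in Ici x, qGauss κ t u
      ≤ κ / √(2 * π) * ((∫ x, qGauss κ s x) * (∫ u in Ici ((s + t) / 2), qGauss κ t u)
          + (∫ x in Iio ((s + t) / 2), qGauss κ s x) * ∫ u, qGauss κ t u) :=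
        mul_le_mul_of_nonneg_left (integral_mul_setIntegral_Ici_le hs (qGauss_nonneg κ s) ht
          (qGauss_nonneg κ t) _) hN
    _ ≤ κ / √(2 * π) * (2 * E * (∫ u, qGauss κ t u) ^ 2) := by
        rw [integral_qGauss_indep κ s t] at tail_s ⊢
        gcongr
        linarith [mul_le_mul_of_nonneg_left tail_t hM, mul_le_mul_of_nonneg_right tail_s hM]
    _ = 4 * √2 * exp (-(κ ^ 2 / 4) * δ ^ 2 / 2) := by
        rw [mul_left_comm, integral_qGauss_sq hκ]
        ring

theorem tendsto_qGauss_pairing_of_lt (hts : t < s) :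
    Tendsto (fun κ => κ / √(2 * π) * ∫ x, qGauss κ s x * symmAntideriv (qGauss κ t) x)
      atTop (nhds 1) := by
  have hexp : Tendsto (fun κ : ℝ => 4 * √2 * exp (-(κ ^ 2 / 4) * ((s - t) / 2) ^ 2 / 2))
      atTop (nhds 0) := by
    have hδ : 0 < ((s - t) / 2) ^ 2 / 8 := by nlinarith
    have hlin := (tendsto_pow_atTop two_ne_zero).atTop_mul_const_of_neg (neg_lt_zero.2 hδ)
    have := (tendsto_exp_atBot.comp hlin).const_mul (4 * √2)
    rw [mul_zero] at this
    refine this.congr fun κ => ?_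
    rw [Function.comp_apply]
    congr 2
    ring
  have htail : Tendsto (fun κ => κ / √(2 * π) * ∫ x, qGauss κ s x * ∫ u in Ici x, qGauss κ t u)
      atTop (nhds 0) := by
    refine squeeze_zero' (eventually_gt_atTop 0 |>.mono fun κ hκ => ?_)
      (eventually_gt_atTop 0 |>.mono fun κ hκ => qGauss_pairing_tail_le hκ hts.le) hexp
    exact mul_nonneg (by positivity) (integral_nonneg fun x => mul_nonneg (qGauss_nonneg κ s x)
      (setIntegral_nonneg measurableSet_Ici fun u _ => qGauss_nonneg κ t u))
  have hpair : ∀ᶠ κ in atTop, 1 - κ / √(2 * π) * ∫ x, qGauss κ s x * ∫ u in Ici x, qGauss κ t u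
      = κ / √(2 * π) * ∫ x, qGauss κ s x * symmAntideriv (qGauss κ t) x := by
    filter_upwards [eventually_gt_atTop 0] with κ hκ
    rw [integral_mul_symmAntideriv (integrable_qGauss hκ.ne' s) (integrable_qGauss hκ.ne' t)
      (qGauss_nonneg κ t), integral_qGauss_indep κ s t]
    linear_combination (-1 / 2 : ℝ) * integral_qGauss_sq hκ t
  have := (tendsto_const_nhds (x := (1 : ℝ))).sub htail
  rw [sub_zero] at this
  exact this.congr' hpair

theorem integral_qGauss_mul_symmAntideriv_neg (κ s t : ℝ) :
    ∫ x, qGauss κ s x * symmAntideriv (qGauss κ t) x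
      = -∫ x, qGauss κ (-s) x * symmAntideriv (qGauss κ (-t)) x := by
  rw [← integral_mul_symmAntideriv_comp_neg]
  simp_rw [qGauss_neg, neg_neg]

end Pairing

theorem qGauss_antideriv_pairing_limit_general (s t : ℝ) :
    (s > t → Tendsto
      (fun κ : ℝ => κ / Real.sqrt (2 * Real.pi) *
        ∫ x : ℝ, qGauss κ s x * symmAntideriv (qGauss κ t) x) atTop (nhds 1)) ∧
    (s < t → Tendsto
      (fun κ : ℝ => κ / Real.sqrt (2 * Real.pi) *
        ∫ x : ℝ, qGauss κ s x * symmAntideriv (qGauss κ t) x) atTop (nhds (-1))) := by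
  refine ⟨tendsto_qGauss_pairing_of_lt, fun hst => ?_⟩
  refine (tendsto_qGauss_pairing_of_lt (neg_lt_neg hst)).neg.congr fun κ => ?_
  rw [integral_qGauss_mul_symmAntideriv_neg κ s t]
  ring

theorem qGauss_antideriv_pairing_limit (s t : ℝ) (hst : s ≠ t) :
    (s > t → Tendsto
      (fun κ : ℝ => κ / Real.sqrt (2 * Real.pi) *
        ∫ x : ℝ, qGauss κ s x * symmAntideriv (qGauss κ t) x) atTop (nhds 1)) ∧
    (s < t → Tendsto
      (fun κ : ℝ => κ / Real.sqrt (2 * Real.pi) *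
        ∫ x : ℝ, qGauss κ s x * symmAntideriv (qGauss κ t) x) atTop (nhds (-1))) :=
  qGauss_antideriv_pairing_limit_general s t
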